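/- In the simply typed λ-calculus over one base type o with products, a family θ = (θ_Q)_{Q finite set} with θ_Q ∈ ⟦A⟧_Q is a profinite λ-term (i.e. for any two finite sets Q, Q′ there exists a closed term M : A with θ_Q = ⟦M⟧_Q and θ_{Q′} = ⟦M⟧_{Q′}) if and only if both: (1) for every finite Q there exists M with θ_Q = ⟦M⟧_Q; and (2) for all finite Q, Q′ with |Q′| ≥ |Q| and every M, if θ_{Q′} = ⟦M⟧_{Q′} then θ_Q = ⟦M⟧_Q. -/
import Mathlib


/-- Simple types over one base type `o`, with products and unit. -/
inductive Ty : Type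
  | o : Ty
  | arr : Ty → Ty → Ty
  | prod : Ty → Ty → Ty
  | unit : Ty

/-- Set-theoretic semantics of simple types, with base type interpreted as `Q`. -/
def sem (Q : Type) : Ty → Type
  | .o => Q
  | .arr A B => sem Q A → sem Q B
  | .prod A B => sem Q A × sem Q B
  | .unit => PUnit

/-- Typed de Bruijn variables. -/
inductive Var : List Ty → Ty → Type
  | vz {Γ A} : Var (A :: Γ) A
  | vs {Γ A B} : Var Γ A → Var (B :: Γ) A

/-- Intrinsically typed terms of the simply typed λ-calculus with products. -/
inductive Tm : List Ty → Ty → Type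
  | var {Γ A} : Var Γ A → Tm Γ A
  | lam {Γ A B} : Tm (A :: Γ) B → Tm Γ (.arr A B)
  | app {Γ A B} : Tm Γ (.arr A B) → Tm Γ A → Tm Γ B
  | pair {Γ A B} : Tm Γ A → Tm Γ B → Tm Γ (.prod A B)
  | fst {Γ A B} : Tm Γ (.prod A B) → Tm Γ A
  | snd {Γ A B} : Tm Γ (.prod A B) → Tm Γ B
  | star {Γ} : Tm Γ .unit

/-- Semantics of contexts. -/
def semCtx (Q : Type) : List Ty → Type
  | [] => PUnit
  | A :: Γ => sem Q A × semCtx Q Γ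

/-- Semantics of variables. -/
def evalVar (Q : Type) : {Γ : List Ty} → {A : Ty} → Var Γ A → semCtx Q Γ → sem Q A
  | _, _, .vz, ρ => ρ.1
  | _, _, .vs x, ρ => evalVar Q x ρ.2

/-- Semantics of terms. -/
def eval (Q : Type) : {Γ : List Ty} → {A : Ty} → Tm Γ A → semCtx Q Γ → sem Q A
  | _, _, .var x, ρ => evalVar Q x ρ
  | _, _, .lam M, ρ => fun a => eval Q M (a, ρ)
  | _, _, .app M N, ρ => eval Q M ρ (eval Q N ρ)
  | _, _, .pair M N, ρ => (eval Q M ρ, eval Q N ρ)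
  | _, _, .fst M, ρ => (eval Q M ρ).1
  | _, _, .snd M, ρ => (eval Q M ρ).2
  | _, _, .star, _ => PUnit.unit

/-- Semantics `⟦M⟧_Q` of a closed term `M`. -/
def ev0 (Q : Type) {A : Ty} (M : Tm [] A) : sem Q A := eval Q M PUnit.unit

/-- If `Q` is a subsingleton, every `sem Q A` is a subsingleton. -/
lemma semSubsingleton (Q : Type) [Subsingleton Q] : ∀ A : Ty, Subsingleton (sem Q A)
  | .o => inferInstanceAs (Subsingleton Q)
  | .arr A B =>
    have := semSubsingleton Q B
    inferInstanceAs (Subsingleton (sem Q A → sem Q B))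
  | .prod A B =>
    have := semSubsingleton Q A
    have := semSubsingleton Q B
    inferInstanceAs (Subsingleton (sem Q A × sem Q B))
  | .unit => inferInstanceAs (Subsingleton PUnit)

/-- If `Q` is nonempty, every `sem Q A` is nonempty. -/
lemma semNonempty (Q : Type) [Nonempty Q] : ∀ A : Ty, Nonempty (sem Q A)
  | .o => inferInstanceAs (Nonempty Q)
  | .arr A B =>
    have := semNonempty Q B
    inferInstanceAs (Nonempty (sem Q A → sem Q B))
  | .prod A B =>
    have := semNonempty Q A
    have := semNonempty Q B
    inferInstanceAs (Nonempty (sem Q A × sem Q B))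
  | .unit => inferInstanceAs (Nonempty PUnit)

/-- The logical relation between `sem Q A` and `sem Q' A` induced by `i : Q → Q'`. -/
def LR {Q Q' : Type} (i : Q → Q') : ∀ A : Ty, sem Q A → sem Q' A → Prop
  | .o, a, b => i a = b
  | .arr A B, f, g => ∀ a b, LR i A a b → LR i B (f a) (g b)
  | .prod A B, p, q => LR i A p.1 q.1 ∧ LR i B p.2 q.2
  | .unit, _, _ => True

/-- The logical relation on environments. -/
def LRCtx {Q Q' : Type} (i : Q → Q') : ∀ Γ : List Ty, semCtx Q Γ → semCtx Q' Γ → Prop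
  | [], _, _ => True
  | A :: Γ, ρ, ρ' => LR i A ρ.1 ρ'.1 ∧ LRCtx i Γ ρ.2 ρ'.2

/-- If `i` is injective and `Q'` is nonempty, the logical relation is left-total and
left-functional, simultaneously by induction on the type. -/
lemma LR_total_funcl {Q Q' : Type} [Nonempty Q'] (i : Q → Q') (hi : Function.Injective i) :
    ∀ A : Ty, (∀ a : sem Q A, ∃ b, LR i A a b) ∧
      (∀ (a a' : sem Q A) (b : sem Q' A), LR i A a b → LR i A a' b → a = a') := by
  intro A
  induction A with
  | o => exact ⟨fun a => ⟨i a, rfl⟩, fun a a' b h h' => hi (h.trans h'.symm)⟩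
  | arr A B ihA ihB =>
    constructor
    · intro f
      classical
      have hne : Nonempty (sem Q' B) := semNonempty Q' B
      refine ⟨fun b => if h : ∃ a, LR i A a b then
          Classical.choose (ihB.1 (f (Classical.choose h)))
        else Classical.choice hne, ?_⟩
      intro a b hab
      have h : ∃ a, LR i A a b := ⟨a, hab⟩
      simp only [dif_pos h]
      have ha : Classical.choose h = a := ihA.2 _ _ b (Classical.choose_spec h) hab
      rw [ha]
      exact Classical.choose_spec (ihB.1 (f a))
    · intro f f' g hf hf'
      funext a
      obtain ⟨b, hb⟩ := ihA.1 a
      exact ihB.2 _ _ (g b) (hf a b hb) (hf' a b hb)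
  | prod A B ihA ihB =>
    constructor
    · intro p
      obtain ⟨b1, h1⟩ := ihA.1 p.1
      obtain ⟨b2, h2⟩ := ihB.1 p.2
      exact ⟨(b1, b2), h1, h2⟩
    · intro p p' q hp hp'
      exact Prod.ext (ihA.2 _ _ q.1 hp.1 hp'.1) (ihB.2 _ _ q.2 hp.2 hp'.2)
  | unit =>
    exact ⟨fun a => ⟨PUnit.unit, trivial⟩, fun a a' _ _ _ => rfl⟩

/-- Fundamental lemma for variables. -/
lemma LR_evalVar {Q Q' : Type} (i : Q → Q') :
    ∀ {Γ : List Ty} {A : Ty} (x : Var Γ A) (ρ : semCtx Q Γ) (ρ' : semCtx Q' Γ),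
      LRCtx i Γ ρ ρ' → LR i A (evalVar Q x ρ) (evalVar Q' x ρ')
  | _, _, .vz, ρ, ρ', h => h.1
  | _, _, .vs x, ρ, ρ', h => LR_evalVar i x ρ.2 ρ'.2 h.2

/-- Fundamental lemma of the logical relation. -/
lemma LR_eval {Q Q' : Type} (i : Q → Q') :
    ∀ {Γ : List Ty} {A : Ty} (M : Tm Γ A) (ρ : semCtx Q Γ) (ρ' : semCtx Q' Γ),
      LRCtx i Γ ρ ρ' → LR i A (eval Q M ρ) (eval Q' M ρ')
  | _, _, .var x, ρ, ρ', h => LR_evalVar i x ρ ρ' h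
  | _, _, .lam M, ρ, ρ', h => fun a b hab => LR_eval i M (a, ρ) (b, ρ') ⟨hab, h⟩
  | _, _, .app M N, ρ, ρ', h =>
    LR_eval i M ρ ρ' h _ _ (LR_eval i N ρ ρ' h)
  | _, _, .pair M N, ρ, ρ', h => ⟨LR_eval i M ρ ρ' h, LR_eval i N ρ ρ' h⟩
  | _, _, .fst M, ρ, ρ', h => (LR_eval i M ρ ρ' h).1
  | _, _, .snd M, ρ, ρ', h => (LR_eval i M ρ ρ' h).2
  | _, _, .star, _, _, _ => trivial

/-- Key fact: semantic equality at a larger finite set implies it at a smaller one. -/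
lemma key_fact {A : Ty} (Q Q' : Type) (hQ : Finite Q) (hQ' : Finite Q')
    (hle : Nat.card Q ≤ Nat.card Q') (M N : Tm [] A)
    (h : ev0 Q' M = ev0 Q' N) : ev0 Q M = ev0 Q N := by
  classical
  rcases isEmpty_or_nonempty Q' with hE | hne
  · have hcard : Nat.card Q = 0 :=
      le_antisymm (by simpa [Nat.card_of_isEmpty] using hle) (Nat.zero_le _)
    have : IsEmpty Q := by
      rcases Nat.card_eq_zero.mp hcard with h0 | h0
      · exact h0
      · exact absurd hQ h0.not_finite
    have : Subsingleton Q := this.instSubsingleton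
    exact (semSubsingleton Q A).allEq _ _
  · have : Fintype Q := Fintype.ofFinite Q
    have : Fintype Q' := Fintype.ofFinite Q'
    have hle' : Fintype.card Q ≤ Fintype.card Q' := by
      simpa [Nat.card_eq_fintype_card] using hle
    obtain ⟨i⟩ := Function.Embedding.nonempty_iff_card_le.mpr hle'
    have h1 := LR_eval i.1 M PUnit.unit PUnit.unit trivial
    have h2 := LR_eval i.1 N PUnit.unit PUnit.unit trivial
    rw [show eval Q' M PUnit.unit = ev0 Q' M from rfl, h] at h1
    exact (LR_total_funcl i.1 i.2 A).2 _ _ _ h1 h2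

/-- a family `θ_Q ∈ ⟦A⟧_Q` over finite sets `Q` is a profinite λ-term
(for any two finite sets `Q, Q'` some closed `M : A` defines both components) iff
(1) every component is definable, and (2) for finite `Q, Q'` with `|Q′| ≥ |Q|`,
any `M` defining `θ_{Q'}` also defines `θ_Q`. -/
theorem profinite_lambda_term_iff (A : Ty)
    (θ : ∀ (Q : Type), Finite Q → sem Q A) :
    (∀ (Q Q' : Type) (hQ : Finite Q) (hQ' : Finite Q'),
      ∃ M : Tm [] A, θ Q hQ = ev0 Q M ∧ θ Q' hQ' = ev0 Q' M)
    ↔ ((∀ (Q : Type) (hQ : Finite Q), ∃ M : Tm [] A, θ Q hQ = ev0 Q M) ∧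
       (∀ (Q Q' : Type) (hQ : Finite Q) (hQ' : Finite Q'), Nat.card Q ≤ Nat.card Q' →
         ∀ M : Tm [] A, θ Q' hQ' = ev0 Q' M → θ Q hQ = ev0 Q M)) := by
  constructor
  · intro h
    refine ⟨fun Q hQ => ⟨(h Q Q hQ hQ).choose, (h Q Q hQ hQ).choose_spec.1⟩, ?_⟩
    intro Q Q' hQ hQ' hle M hM
    obtain ⟨N, hN, hN'⟩ := h Q Q' hQ hQ'
    have := key_fact Q Q' hQ hQ' hle N M (hN'.symm.trans hM)
    rw [hN, this]
  · rintro ⟨h1, h2⟩ Q Q' hQ hQ'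
    rcases le_total (Nat.card Q) (Nat.card Q') with hle | hle
    · obtain ⟨M, hM⟩ := h1 Q' hQ'
      exact ⟨M, h2 Q Q' hQ hQ' hle M hM, hM⟩
    · obtain ⟨M, hM⟩ := h1 Q hQ
      exact ⟨M, hM, h2 Q' Q hQ' hQ hle M hM⟩
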